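/- The occupancy fraction of the hard-core model is monotone: if strong local (β,γ)-occupancy holds on a graph G of maximum degree Δ, then the expected size of a hard-core independent set at fugacity λ is at least |V(G)|/(β + γΔ). -/

import Mathlib

set_option maxHeartbeats 1000000


open scoped Classical

/-- The finset of independent sets of a finite graph. -/
noncomputable def indepFinset {V : Type*} [Fintype V] (F : SimpleGraph V) :
    Finset (Finset V) :=
  Finset.univ.filter (fun I => ∀ u ∈ I, ∀ w ∈ I, ¬ F.Adj u w)

/-- The hard-core partition function `Z_F(λ) = Σ_{I independent} λ^|I|`. -/
noncomputable def hcZ {V : Type*} [Fintype V] (F : SimpleGraph V) (lam : ℝ) : ℝ :=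
  ∑ I ∈ indepFinset F, lam ^ I.card

/-- The hard-core model on `G` at fugacity `λ` has strong local `(β,γ)`-occupancy:
for every vertex `u` and every subgraph `F` of `G[N(u)]`,
`β·(λ/(1+λ))·(1/Z_F(λ)) + γ·(λ Z_F'(λ)/Z_F(λ)) ≥ 1`. -/
def StrongLocalOcc {V : Type*} [Fintype V] (G : SimpleGraph V) (lam β γ : ℝ) : Prop :=
  ∀ (u : V) (H' : G.Subgraph), H'.verts ⊆ G.neighborSet u →
    β * (lam / (1 + lam)) * (1 / hcZ H'.coe lam)
      + γ * (lam * deriv (hcZ H'.coe) lam / hcZ H'.coe lam) ≥ 1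

lemma hcZ_deriv {W : Type*} [Fintype W] (F : SimpleGraph W) (x : ℝ) :
    deriv (hcZ F) x = ∑ I ∈ indepFinset F, (I.card : ℝ) * x ^ (I.card - 1) := by
  have h : HasDerivAt (hcZ F) (∑ I ∈ indepFinset F, (I.card : ℝ) * x ^ (I.card - 1)) x := by
    have : HasDerivAt (fun y : ℝ => ∑ I ∈ indepFinset F, y ^ I.card)
        (∑ I ∈ indepFinset F, (I.card : ℝ) * x ^ (I.card - 1)) x :=
      HasDerivAt.fun_sum fun (I : Finset W) _ => hasDerivAt_pow I.card x
    exact this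
  exact h.deriv


lemma lam_mul_hcZ_deriv {W : Type*} [Fintype W] (F : SimpleGraph W) (x : ℝ) :
    x * deriv (hcZ F) x = ∑ I ∈ indepFinset F, (I.card : ℝ) * x ^ I.card := by
  rw [hcZ_deriv, Finset.mul_sum]
  refine Finset.sum_congr rfl fun I _ => ?_
  rcases Nat.eq_zero_or_pos I.card with h | h
  · simp [h]
  · rw [← Nat.succ_pred_eq_of_pos h]
    simp only [Nat.succ_sub_one]
    rw [pow_succ]
    ring


lemma empty_mem_indepFinset {W : Type*} [Fintype W] (F : SimpleGraph W) :
    ∅ ∈ indepFinset F := by simp [indepFinset]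


lemma one_le_hcZ {W : Type*} [Fintype W] (F : SimpleGraph W) {lam : ℝ} (h : 0 ≤ lam) :
    1 ≤ hcZ F lam := by
  have := Finset.single_le_sum (f := fun I : Finset W => lam ^ I.card)
    (fun i _ => pow_nonneg h _) (empty_mem_indepFinset F)
  simpa [hcZ] using this


lemma sum_indep_coe {V : Type*} [Fintype V] (G : SimpleGraph V) (s : Finset V) (f : ℕ → ℝ) :
    ∑ I ∈ indepFinset ((⊤ : G.Subgraph).induce ↑s).coe, f I.card
      = ∑ S ∈ s.powerset.filter (fun S => S ∈ indepFinset G), f S.card := by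
  refine Finset.sum_nbij' (i := fun I => I.map (Function.Embedding.subtype _))
    (j := fun S => S.subtype _) ?_ ?_ ?_ ?_ ?_
  · intro I hI
    simp only [Finset.mem_filter, Finset.mem_powerset, indepFinset, Finset.mem_univ, true_and] at hI ⊢
    constructor
    · intro v hv
      simp only [Finset.mem_map, Function.Embedding.coe_subtype] at hv
      obtain ⟨a, _, rfl⟩ := hv
      exact a.2
    · intro a ha b hb hadj
      simp only [Finset.mem_map, Function.Embedding.coe_subtype] at ha hb
      obtain ⟨a', ha', rfl⟩ := ha
      obtain ⟨b', hb', rfl⟩ := hb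
      exact hI a' ha' b' hb' (by simp [SimpleGraph.Subgraph.coe_adj, a'.2, b'.2, hadj]; exact ⟨a'.2, b'.2⟩)
  · intro S hS
    simp only [indepFinset, Finset.mem_filter, Finset.mem_univ, true_and, Finset.mem_powerset] at hS ⊢
    intro a ha b hb hadj
    simp only [Finset.mem_subtype] at ha hb
    rw [SimpleGraph.Subgraph.coe_adj, SimpleGraph.Subgraph.induce_adj] at hadj
    exact hS.2 a ha b hb hadj.2.2
  · intro I hI
    ext a
    simp only [Finset.mem_subtype, Finset.mem_map, Function.Embedding.coe_subtype]
    constructor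
    · rintro ⟨y, hy, he⟩
      rwa [Subtype.ext he] at hy
    · intro ha
      exact ⟨a, ha, rfl⟩
  · intro S hS
    simp only [Finset.mem_filter, Finset.mem_powerset] at hS
    ext x
    simp only [Finset.mem_map, Function.Embedding.coe_subtype, Finset.mem_subtype]
    constructor
    · rintro ⟨y, hy, rfl⟩
      exact hy
    · intro hx
      exact ⟨⟨x, by simpa using hS.1 hx⟩, hx, rfl⟩
  · intro I hI
    simp [Finset.card_map]


lemma hcZ_of_isEmpty {W : Type*} [Fintype W] [IsEmpty W] (F : SimpleGraph W) :
    hcZ F = fun _ => 1 := by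
  funext x
  have h1 : indepFinset F = {∅} := by
    apply Finset.eq_singleton_iff_unique_mem.mpr
    exact ⟨empty_mem_indepFinset F, fun I _ => Finset.eq_empty_of_isEmpty I⟩
  simp [hcZ, h1]


lemma beta_ge {V : Type*} [Fintype V] (G : SimpleGraph V) {lam β γ : ℝ}
    (hocc : StrongLocalOcc G lam β γ) (u : V) : 1 ≤ β * (lam / (1 + lam)) := by
  have h := hocc u ⊥ (by simp)
  haveI : IsEmpty ↥(⊥ : G.Subgraph).verts :=
    Set.isEmpty_coe_sort.mpr SimpleGraph.Subgraph.verts_bot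
  rw [hcZ_of_isEmpty] at h
  simpa using h

/-- Numeric consequence of strong local occupancy for a subset of the neighborhood. -/

lemma occ_numeric {V : Type*} [Fintype V] (G : SimpleGraph V) [DecidableRel G.Adj] {lam β γ : ℝ}
    (hlam : 0 < lam) (hocc : StrongLocalOcc G lam β γ) (u : V) (s : Finset V)
    (hs : s ⊆ G.neighborFinset u) :
    lam + (∑ S ∈ s.powerset.filter (· ∈ indepFinset G), lam ^ S.card)
      ≤ β * lam + γ * (∑ S ∈ s.powerset.filter (· ∈ indepFinset G),
          (S.card : ℝ) * lam ^ S.card) := by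
  set SA := s.powerset.filter (· ∈ indepFinset G) with hSA
  set ZA := ∑ S ∈ SA, lam ^ S.card with hZA
  set DA := ∑ S ∈ SA, (S.card : ℝ) * lam ^ S.card with hDA
  have hverts : ((⊤ : G.Subgraph).induce ↑s).verts ⊆ G.neighborSet u := by
    intro v hv
    simp only [SimpleGraph.Subgraph.induce_verts, Finset.coe_sort_coe, Finset.mem_coe] at hv
    exact (G.mem_neighborFinset u v).mp (hs hv)
  have h := hocc u _ hverts
  have hZ : hcZ ((⊤ : G.Subgraph).induce ↑s).coe lam = ZA := by
    rw [hZA, hSA]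
    exact sum_indep_coe G s (fun n => lam ^ n)
  have hD : lam * deriv (hcZ ((⊤ : G.Subgraph).induce ↑s).coe) lam = DA := by
    rw [lam_mul_hcZ_deriv, hDA, hSA]
    exact sum_indep_coe G s (fun n => (n : ℝ) * lam ^ n)
  rw [hZ, hD] at h
  have hZ1 : (1 : ℝ) ≤ ZA := by
    rw [← hZ]; exact one_le_hcZ _ hlam.le
  have hZpos : (0 : ℝ) < ZA := lt_of_lt_of_le one_pos hZ1
  have h2 : ZA ≤ β * (lam / (1 + lam)) + γ * DA := by
    have h3 := mul_le_mul_of_nonneg_right h hZpos.le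
    rw [one_mul] at h3
    calc ZA ≤ (β * (lam / (1 + lam)) * (1 / ZA) + γ * (DA / ZA)) * ZA := h3
      _ = β * (lam / (1 + lam)) + γ * DA := by field_simp
  have hb := beta_ge G hocc u
  have hl1 : (0 : ℝ) < 1 + lam := by linarith
  have hbe : β * lam = (β * (lam / (1 + lam))) * (1 + lam) := by field_simp
  nlinarith [mul_le_mul_of_nonneg_right hb hlam.le]


lemma mem_indepFinset {V : Type*} [Fintype V] (G : SimpleGraph V) (I : Finset V) :
    I ∈ indepFinset G ↔ ∀ a ∈ I, ∀ b ∈ I, ¬ G.Adj a b := by simp [indepFinset]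


lemma indep_mono {V : Type*} [Fintype V] {G : SimpleGraph V} {J I : Finset V}
    (hJI : J ⊆ I) (hI : I ∈ indepFinset G) : J ∈ indepFinset G := by
  rw [mem_indepFinset] at hI ⊢
  exact fun a ha b hb => hI a (hJI ha) b (hJI hb)


lemma fiber_eq {V : Type*} [Fintype V] (G : SimpleGraph V) [DecidableRel G.Adj] (u : V) (J : Finset V)
    (hJ : J ∈ indepFinset G) (huJ : u ∉ J) (hJN : ∀ v ∈ J, v ∉ G.neighborFinset u) :
    (indepFinset G).filter (fun I => I \ (insert u (G.neighborFinset u)) = J)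
      = insert (insert u J)
          ((((G.neighborFinset u).filter (fun v => ∀ j ∈ J, ¬ G.Adj j v)).powerset.filter
              (· ∈ indepFinset G)).image (fun S => J ∪ S)) := by
  set Nc := insert u (G.neighborFinset u) with hNc
  set A := (G.neighborFinset u).filter (fun v => ∀ j ∈ J, ¬ G.Adj j v) with hA
  ext I
  simp only [Finset.mem_filter, Finset.mem_insert, Finset.mem_image, Finset.mem_powerset]
  constructor
  · rintro ⟨hind, hdiff⟩
    rw [mem_indepFinset] at hind
    by_cases hu : u ∈ I
    · left
      apply Finset.Subset.antisymm
      · intro v hv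
        by_cases hvNc : v ∈ Nc
        · rcases Finset.mem_insert.mp hvNc with rfl | hvN
          · exact Finset.mem_insert_self _ _
          · exact absurd ((G.mem_neighborFinset u v).mp hvN) (hind u hu v hv)
        · exact Finset.mem_insert_of_mem (hdiff ▸ Finset.mem_sdiff.mpr ⟨hv, hvNc⟩)
      · intro v hv
        rcases Finset.mem_insert.mp hv with rfl | hvJ
        · exact hu
        · exact (Finset.sdiff_subset) (hdiff ▸ hvJ : v ∈ I \ Nc)
    · right
      refine ⟨I ∩ G.neighborFinset u, ⟨⟨?_, ?_⟩, ?_⟩⟩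
      · intro v hv
        rw [Finset.mem_inter] at hv
        rw [hA, Finset.mem_filter]
        refine ⟨hv.2, fun j hj => ?_⟩
        have hjI : j ∈ I := Finset.sdiff_subset (hdiff ▸ hj : j ∈ I \ Nc)
        exact hind j hjI v hv.1
      · exact indep_mono (Finset.inter_subset_left) ((mem_indepFinset G I).mpr hind)
      · ext v
        simp only [Finset.mem_union, Finset.mem_inter]
        constructor
        · rintro (hvJ | ⟨hvI, _⟩)
          · exact Finset.sdiff_subset (hdiff ▸ hvJ : v ∈ I \ Nc)
          · exact hvI
        · intro hvI
          by_cases hvNc : v ∈ Nc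
          · rcases Finset.mem_insert.mp hvNc with rfl | hvN
            · exact absurd hvI hu
            · exact Or.inr ⟨hvI, hvN⟩
          · exact Or.inl (hdiff ▸ Finset.mem_sdiff.mpr ⟨hvI, hvNc⟩)
  · rintro (rfl | ⟨S, ⟨hSA, hSind⟩, rfl⟩)
    · constructor
      · rw [mem_indepFinset]
        intro a ha b hb hadj
        rw [mem_indepFinset] at hJ
        rcases Finset.mem_insert.mp ha with rfl | haJ
        · rcases Finset.mem_insert.mp hb with rfl | hbJ
          · exact G.irrefl hadj
          · exact hJN b hbJ ((G.mem_neighborFinset a b).mpr hadj)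
        · rcases Finset.mem_insert.mp hb with rfl | hbJ
          · exact hJN a haJ ((G.mem_neighborFinset b a).mpr hadj.symm)
          · exact hJ a haJ b hbJ hadj
      · ext v
        simp only [Finset.mem_sdiff, Finset.mem_insert]
        constructor
        · rintro ⟨rfl | hvJ, hvNc⟩
          · exact absurd (Finset.mem_insert_self _ _) hvNc
          · exact hvJ
        · intro hvJ
          refine ⟨Or.inr hvJ, fun hvNc => ?_⟩
          rcases Finset.mem_insert.mp hvNc with rfl | hvN
          · exact huJ hvJ
          · exact hJN v hvJ hvN
    · have hSsub : ∀ v ∈ S, v ∈ A := fun v hv => hSA hv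
      constructor
      · rw [mem_indepFinset]
        intro a ha b hb hadj
        rw [mem_indepFinset] at hJ hSind
        rcases Finset.mem_union.mp ha with haJ | haS
        · rcases Finset.mem_union.mp hb with hbJ | hbS
          · exact hJ a haJ b hbJ hadj
          · have := hSsub b hbS
            rw [hA, Finset.mem_filter] at this
            exact this.2 a haJ hadj
        · rcases Finset.mem_union.mp hb with hbJ | hbS
          · have := hSsub a haS
            rw [hA, Finset.mem_filter] at this
            exact this.2 b hbJ hadj.symm
          · exact hSind a haS b hbS hadj
      · ext v
        simp only [Finset.mem_sdiff, Finset.mem_union]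
        constructor
        · rintro ⟨hvJ | hvS, hvNc⟩
          · exact hvJ
          · have := hSsub v hvS
            rw [hA, Finset.mem_filter] at this
            exact absurd (Finset.mem_insert_of_mem this.1) hvNc
        · intro hvJ
          refine ⟨Or.inl hvJ, fun hvNc => ?_⟩
          rcases Finset.mem_insert.mp hvNc with rfl | hvN
          · exact huJ hvJ
          · exact hJN v hvJ hvN


lemma perJ {V : Type*} [Fintype V] (G : SimpleGraph V) [DecidableRel G.Adj] {lam β γ : ℝ}
    (hlam : 0 < lam) (hβ : 0 < β) (hγ : 0 < γ)
    (hocc : StrongLocalOcc G lam β γ) (u : V) (J : Finset V) :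
    ∑ I ∈ (indepFinset G).filter (fun I => I \ (insert u (G.neighborFinset u)) = J),
        lam ^ I.card
      ≤ β * ∑ I ∈ (indepFinset G).filter
            (fun I => I \ (insert u (G.neighborFinset u)) = J),
          (if u ∈ I then lam ^ I.card else 0)
        + γ * ∑ I ∈ (indepFinset G).filter
            (fun I => I \ (insert u (G.neighborFinset u)) = J),
          lam ^ I.card * ((I ∩ G.neighborFinset u).card : ℝ) := by
  set Nc := insert u (G.neighborFinset u) with hNc
  by_cases hgood : J ∈ indepFinset G ∧ u ∉ J ∧ ∀ v ∈ J, v ∉ G.neighborFinset u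
  · obtain ⟨hJ, huJ, hJN⟩ := hgood
    set A := (G.neighborFinset u).filter (fun v => ∀ j ∈ J, ¬ G.Adj j v) with hA
    set SA := A.powerset.filter (· ∈ indepFinset G) with hSA
    have hfib := fiber_eq G u J hJ huJ hJN
    have huA : u ∉ A := fun h => G.notMem_neighborFinset_self u (Finset.filter_subset _ _ h)
    have hSsubA : ∀ S ∈ SA, S ⊆ A := fun S hS =>
      Finset.mem_powerset.mp (Finset.mem_filter.mp hS).1
    have hAN : A ⊆ G.neighborFinset u := Finset.filter_subset _ _
    have hJdisj : ∀ S ∈ SA, Disjoint J S := by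
      intro S hS
      rw [Finset.disjoint_left]
      intro v hvJ hvS
      exact hJN v hvJ (hAN (hSsubA S hS hvS))
    have hnotmem : insert u J ∉ SA.image (fun S => J ∪ S) := by
      rw [Finset.mem_image]
      rintro ⟨S, hS, hSeq⟩
      have : u ∈ J ∪ S := hSeq ▸ Finset.mem_insert_self u J
      rcases Finset.mem_union.mp this with h | h
      · exact huJ h
      · exact huA (hSsubA S hS h)
    have hinj : Set.InjOn (fun S => J ∪ S) SA := by
      intro S1 h1 S2 h2 heq
      have e1 : (J ∪ S1) \ J = S1 := Finset.union_sdiff_cancel_left (hJdisj S1 h1)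
      have e2 : (J ∪ S2) \ J = S2 := Finset.union_sdiff_cancel_left (hJdisj S2 h2)
      rw [← e1, ← e2]
      exact congrArg (· \ J) heq
    have hcard : ∀ S ∈ SA, (J ∪ S).card = J.card + S.card := fun S hS =>
      Finset.card_union_of_disjoint (hJdisj S hS)
    have hcardins : (insert u J).card = J.card + 1 := Finset.card_insert_of_notMem huJ
    have hinter : ∀ S ∈ SA, (J ∪ S) ∩ G.neighborFinset u = S := by
      intro S hS
      rw [Finset.union_inter_distrib_right]
      have e1 : J ∩ G.neighborFinset u = ∅ := by
        rw [Finset.eq_empty_iff_forall_notMem]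
        intro v hv
        rw [Finset.mem_inter] at hv
        exact hJN v hv.1 hv.2
      have e2 : S ∩ G.neighborFinset u = S :=
        Finset.inter_eq_left.mpr fun v hv => hAN (hSsubA S hS hv)
      rw [e1, e2, Finset.empty_union]
    have hinterins : insert u J ∩ G.neighborFinset u = ∅ := by
      rw [Finset.eq_empty_iff_forall_notMem]
      intro v hv
      rw [Finset.mem_inter] at hv
      rcases Finset.mem_insert.mp hv.1 with rfl | hvJ
      · exact G.notMem_neighborFinset_self _ hv.2
      · exact hJN v hvJ hv.2
    have huJS : ∀ S ∈ SA, u ∉ J ∪ S := by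
      intro S hS h
      rcases Finset.mem_union.mp h with h | h
      · exact huJ h
      · exact huA (hSsubA S hS h)
    rw [hfib, Finset.sum_insert hnotmem, Finset.sum_insert hnotmem, Finset.sum_insert hnotmem,
      Finset.sum_image hinj, Finset.sum_image hinj, Finset.sum_image hinj]
    rw [if_pos (Finset.mem_insert_self u J), hcardins, hinterins]
    have s2 : ∑ S ∈ SA, (if u ∈ J ∪ S then lam ^ (J ∪ S).card else 0) = 0 :=
      Finset.sum_eq_zero fun S hS => if_neg (huJS S hS)
    have s3 : ∑ S ∈ SA, lam ^ (J ∪ S).card * (((J ∪ S) ∩ G.neighborFinset u).card : ℝ)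
        = lam ^ J.card * ∑ S ∈ SA, (S.card : ℝ) * lam ^ S.card := by
      rw [Finset.mul_sum]
      refine Finset.sum_congr rfl fun S hS => ?_
      rw [hcard S hS, hinter S hS, pow_add]
      ring
    have s4 : ∑ S ∈ SA, lam ^ (J ∪ S).card = lam ^ J.card * ∑ S ∈ SA, lam ^ S.card := by
      rw [Finset.mul_sum]
      refine Finset.sum_congr rfl fun S hS => ?_
      rw [hcard S hS, pow_add]
    rw [s2, s3, s4, Finset.card_empty]
    have h := occ_numeric G hlam hocc u A hAN
    rw [← hSA] at h
    have h2 := mul_le_mul_of_nonneg_left h (pow_nonneg hlam.le J.card)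
    calc lam ^ (J.card + 1) + lam ^ J.card * ∑ S ∈ SA, lam ^ S.card
        = lam ^ J.card * (lam + ∑ S ∈ SA, lam ^ S.card) := by rw [pow_succ]; ring
      _ ≤ lam ^ J.card * (β * lam + γ * ∑ S ∈ SA, (S.card : ℝ) * lam ^ S.card) := h2
      _ = β * (lam ^ (J.card + 1) + 0)
          + γ * (lam ^ (J.card + 1) * ((0:ℕ):ℝ)
              + lam ^ J.card * ∑ S ∈ SA, (S.card : ℝ) * lam ^ S.card) := by
            rw [pow_succ]
            push_cast
            ring
  · have hfib : (indepFinset G).filter (fun I => I \ Nc = J) = ∅ := by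
      rw [Finset.filter_eq_empty_iff]
      intro I hI hdiff
      apply hgood
      subst hdiff
      refine ⟨indep_mono Finset.sdiff_subset hI, ?_, ?_⟩
      · intro h
        exact (Finset.mem_sdiff.mp h).2 (Finset.mem_insert_self u _)
      · intro v hv hvN
        exact (Finset.mem_sdiff.mp hv).2 (Finset.mem_insert_of_mem hvN)
    rw [hfib]
    simp


lemma key_u {V : Type*} [Fintype V] (G : SimpleGraph V) [DecidableRel G.Adj] {lam β γ : ℝ}
    (hlam : 0 < lam) (hβ : 0 < β) (hγ : 0 < γ)
    (hocc : StrongLocalOcc G lam β γ) (u : V) :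
    hcZ G lam ≤ β * ∑ I ∈ (indepFinset G).filter (fun I => u ∈ I), lam ^ I.card
      + γ * ∑ I ∈ indepFinset G, lam ^ I.card * ((I ∩ G.neighborFinset u).card : ℝ) := by
  rw [hcZ, Finset.sum_filter]
  rw [← Finset.sum_fiberwise (indepFinset G) (fun I => I \ (insert u (G.neighborFinset u)))
        (fun I => lam ^ I.card),
      ← Finset.sum_fiberwise (indepFinset G) (fun I => I \ (insert u (G.neighborFinset u)))
        (fun I => if u ∈ I then lam ^ I.card else 0),
      ← Finset.sum_fiberwise (indepFinset G) (fun I => I \ (insert u (G.neighborFinset u)))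
        (fun I => lam ^ I.card * ((I ∩ G.neighborFinset u).card : ℝ))]
  rw [Finset.mul_sum, Finset.mul_sum, ← Finset.sum_add_distrib]
  exact Finset.sum_le_sum fun J _ => perJ G hlam hβ hγ hocc u J


/-- Strong local `(β,γ)`-occupancy implies that the expected size of a hard-core
independent set is at least `|V(G)|/(β + γΔ)`. -/
theorem stmt11 {V : Type*} [Fintype V] (G : SimpleGraph V) [DecidableRel G.Adj]
    (lam β γ : ℝ) (hlam : 0 < lam) (hβ : 0 < β) (hγ : 0 < γ)
    (hocc : StrongLocalOcc G lam β γ) :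
    (∑ I ∈ indepFinset G, lam ^ I.card * (I.card : ℝ)) / hcZ G lam
      ≥ (Fintype.card V : ℝ) / (β + γ * G.maxDegree) := by
  set E := ∑ I ∈ indepFinset G, lam ^ I.card * (I.card : ℝ) with hE
  have hZpos : (0 : ℝ) < hcZ G lam := lt_of_lt_of_le one_pos (one_le_hcZ G hlam.le)
  have hden : (0 : ℝ) < β + γ * G.maxDegree := by positivity
  have hsum1 : ∑ u : V, ∑ I ∈ (indepFinset G).filter (fun I => u ∈ I), lam ^ I.card = E := by
    have : ∀ u : V, ∑ I ∈ (indepFinset G).filter (fun I => u ∈ I), lam ^ I.card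
        = ∑ I ∈ indepFinset G, if u ∈ I then lam ^ I.card else 0 :=
      fun u => Finset.sum_filter _ _
    rw [Finset.sum_congr rfl fun u _ => this u, Finset.sum_comm]
    refine Finset.sum_congr rfl fun I _ => ?_
    rw [Finset.sum_ite_mem, Finset.univ_inter, Finset.sum_const, nsmul_eq_mul]
    ring
  have hdegsum : ∀ I : Finset V, ∑ u : V, ((I ∩ G.neighborFinset u).card : ℝ)
      = ∑ v ∈ I, (G.degree v : ℝ) := by
    intro I
    have e1 : ∀ u : V, ((I ∩ G.neighborFinset u).card : ℝ)
        = ∑ v ∈ I, (if v ∈ G.neighborFinset u then (1:ℝ) else 0) := by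
      intro u
      rw [← Finset.filter_mem_eq_inter, Finset.card_filter]
      push_cast
      rfl
    rw [Finset.sum_congr rfl fun u _ => e1 u, Finset.sum_comm]
    refine Finset.sum_congr rfl fun v hv => ?_
    have e2 : ∀ u : V, (if v ∈ G.neighborFinset u then (1:ℝ) else 0)
        = (if u ∈ G.neighborFinset v then (1:ℝ) else 0) := by
      intro u
      refine if_congr ?_ rfl rfl
      rw [SimpleGraph.mem_neighborFinset, SimpleGraph.mem_neighborFinset, G.adj_comm]
    rw [Finset.sum_congr rfl fun u _ => e2 u]
    rw [Finset.sum_ite_mem, Finset.univ_inter, Finset.sum_const, nsmul_eq_mul, mul_one]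
    rw [SimpleGraph.degree]
  have hsum2 : ∑ u : V, ∑ I ∈ indepFinset G, lam ^ I.card * ((I ∩ G.neighborFinset u).card : ℝ)
      ≤ (G.maxDegree : ℝ) * E := by
    rw [Finset.sum_comm]
    have e3 : ∀ I ∈ indepFinset G,
        ∑ u : V, lam ^ I.card * ((I ∩ G.neighborFinset u).card : ℝ)
          ≤ (G.maxDegree : ℝ) * (lam ^ I.card * (I.card : ℝ)) := by
      intro I _
      rw [← Finset.mul_sum, hdegsum I]
      have h4 : ∑ v ∈ I, (G.degree v : ℝ) ≤ ∑ v ∈ I, (G.maxDegree : ℝ) :=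
        Finset.sum_le_sum fun v _ => by exact_mod_cast G.degree_le_maxDegree v
      rw [Finset.sum_const, nsmul_eq_mul] at h4
      have h5 := mul_le_mul_of_nonneg_left h4 (pow_nonneg hlam.le I.card)
      calc lam ^ I.card * ∑ v ∈ I, (G.degree v : ℝ)
          ≤ lam ^ I.card * ((I.card : ℝ) * (G.maxDegree : ℝ)) := h5
        _ = (G.maxDegree : ℝ) * (lam ^ I.card * (I.card : ℝ)) := by ring
    calc ∑ I ∈ indepFinset G, ∑ u : V, lam ^ I.card * ((I ∩ G.neighborFinset u).card : ℝ)
        ≤ ∑ I ∈ indepFinset G, (G.maxDegree : ℝ) * (lam ^ I.card * (I.card : ℝ)) :=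
          Finset.sum_le_sum e3
      _ = (G.maxDegree : ℝ) * E := by rw [hE, Finset.mul_sum]
  have hmain : (Fintype.card V : ℝ) * hcZ G lam ≤ (β + γ * G.maxDegree) * E := by
    have h6 : ∑ u : V, hcZ G lam
        ≤ ∑ u : V, (β * ∑ I ∈ (indepFinset G).filter (fun I => u ∈ I), lam ^ I.card
          + γ * ∑ I ∈ indepFinset G, lam ^ I.card * ((I ∩ G.neighborFinset u).card : ℝ)) :=
      Finset.sum_le_sum fun u _ => key_u G hlam hβ hγ hocc u
    rw [Finset.sum_const, nsmul_eq_mul, Finset.card_univ] at h6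
    rw [Finset.sum_add_distrib, ← Finset.mul_sum, ← Finset.mul_sum, hsum1] at h6
    have h7 := mul_le_mul_of_nonneg_left hsum2 hγ.le
    nlinarith [h6, h7]
  rw [ge_iff_le, div_le_div_iff₀ hden hZpos]
  nlinarith [hmain]
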